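/- arXiv:1210.1438 — 2 statements merged into one kernel-verified Lean document; each statement's English description precedes it below -/
import Mathlib

section
/- Let J be a B(H)-ideal and S ∈ J. Then J(S)J ⊆ JS + SJ + J(S)J ⊆ ⟨S⟩_J ⊆ (S)_J^ℝ ⊆ (S)_J ⊆ (S). Moreover, J(S)J is a B(H)-ideal and JS + SJ + J(S)J is a J-ideal. -/
open scoped BigOperators
open TopologicalSpace

variable {H : Type*} [NormedAddCommGroup H] [InnerProductSpace ℂ H] [CompleteSpace H]

/-- `J` is a two-sided ideal of `B(H)`: an additive subgroup closed under left and
right multiplication by arbitrary bounded operators. -/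
def IsBHIdeal (J : Set (H →L[ℂ] H)) : Prop :=
  (0 : H →L[ℂ] H) ∈ J ∧
  (∀ x ∈ J, ∀ y ∈ J, x + y ∈ J) ∧
  (∀ x ∈ J, -x ∈ J) ∧
  ∀ (A : H →L[ℂ] H), ∀ x ∈ J, A * x ∈ J ∧ x * A ∈ J

/-- `I` is a `J`-ideal: an additive subgroup of `B(H)` contained in `J` and closed
under left and right multiplication by elements of `J`. -/
def IsSubideal (J I : Set (H →L[ℂ] H)) : Prop :=
  I ⊆ J ∧ (0 : H →L[ℂ] H) ∈ I ∧
  (∀ x ∈ I, ∀ y ∈ I, x + y ∈ I) ∧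
  (∀ x ∈ I, -x ∈ I) ∧
  ∀ A ∈ J, ∀ x ∈ I, A * x ∈ I ∧ x * A ∈ I

/-- A linear `J`-ideal: a `J`-ideal closed under multiplication by complex scalars. -/
def IsLinearSubideal (J I : Set (H →L[ℂ] H)) : Prop :=
  IsSubideal J I ∧ ∀ (c : ℂ), ∀ x ∈ I, c • x ∈ I

/-- A real linear `J`-ideal: a `J`-ideal closed under multiplication by real scalars. -/
def IsRealSubideal (J I : Set (H →L[ℂ] H)) : Prop :=
  IsSubideal J I ∧ ∀ (r : ℝ), ∀ x ∈ I, r • x ∈ I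

/-- `(𝒮)`: the smallest two-sided ideal of `B(H)` containing `𝒮`. -/
def genBH (𝒮 : Set (H →L[ℂ] H)) : Set (H →L[ℂ] H) :=
  ⋂₀ {I | IsBHIdeal I ∧ 𝒮 ⊆ I}

/-- `⟨𝒮⟩_J`: the smallest `J`-ideal containing `𝒮`. -/
def genSub (J 𝒮 : Set (H →L[ℂ] H)) : Set (H →L[ℂ] H) :=
  ⋂₀ {I | IsSubideal J I ∧ 𝒮 ⊆ I}

/-- `(𝒮)_J`: the smallest linear `J`-ideal containing `𝒮`. -/
def genLin (J 𝒮 : Set (H →L[ℂ] H)) : Set (H →L[ℂ] H) :=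
  ⋂₀ {I | IsLinearSubideal J I ∧ 𝒮 ⊆ I}

/-- `(𝒮)_J^ℝ`: the smallest real linear `J`-ideal containing `𝒮`. -/
def genReal (J 𝒮 : Set (H →L[ℂ] H)) : Set (H →L[ℂ] H) :=
  ⋂₀ {I | IsRealSubideal J I ∧ 𝒮 ⊆ I}

/-- `J(𝒮)`: all finite sums `Σ Aᵢ Xᵢ` with `Aᵢ ∈ J` and `Xᵢ ∈ (𝒮)`. -/
def JGen (J 𝒮 : Set (H →L[ℂ] H)) : Set (H →L[ℂ] H) :=
  {T | ∃ (n : ℕ) (A X : Fin n → (H →L[ℂ] H)),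
    (∀ i, A i ∈ J ∧ X i ∈ genBH 𝒮) ∧ T = ∑ i, A i * X i}

/-- `J(𝒮)J`: all finite sums `Σ Aᵢ Xᵢ Bᵢ` with `Aᵢ, Bᵢ ∈ J` and `Xᵢ ∈ (𝒮)`. -/
def JGenJ (J 𝒮 : Set (H →L[ℂ] H)) : Set (H →L[ℂ] H) :=
  {T | ∃ (n : ℕ) (A X B : Fin n → (H →L[ℂ] H)),
    (∀ i, A i ∈ J ∧ X i ∈ genBH 𝒮 ∧ B i ∈ J) ∧ T = ∑ i, A i * X i * B i}

/-- `JS + SJ + J(S)J = {AS + SB + Y : A, B ∈ J, Y ∈ J(S)J}`. -/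
def JSplus (J : Set (H →L[ℂ] H)) (S : H →L[ℂ] H) : Set (H →L[ℂ] H) :=
  {T | ∃ A ∈ J, ∃ B ∈ J, ∃ Y ∈ JGenJ J {S}, T = A * S + S * B + Y}

/-- `K(H)`: the compact operators on `H`. -/
def KH : Set (H →L[ℂ] H) := {T | IsCompactOperator ⇑T}

/-- `T` is a finite-rank operator: its range is finite-dimensional. -/
def IsFiniteRank (T : H →L[ℂ] H) : Prop :=
  FiniteDimensional ℂ (LinearMap.range (T : H →ₗ[ℂ] H))

/-!
Every inclusion comes from a minimality argument. The one with content is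
`J(S)J ⊆ I` for a `J`-ideal `I` containing `S`: the set of `X` with `A X B ∈ I` for all
`A, B ∈ J` is a two-sided ideal of `B(H)` containing `S`, hence contains `(S)`.
For `(S)_J ⊆ (S)`, the trace `I ∩ J` of a `B(H)`-ideal `I ∋ S` is a linear `J`-ideal,
complex scalars being absorbed as `c • X = (c • 1) * X`.
-/

section

variable {H : Type*} [NormedAddCommGroup H] [InnerProductSpace ℂ H]

namespace IsBHIdeal

variable {J : Set (H →L[ℂ] H)}

theorem zero_mem (hJ : IsBHIdeal J) : (0 : H →L[ℂ] H) ∈ J := hJ.1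

theorem add_mem (hJ : IsBHIdeal J) {x y : H →L[ℂ] H} (hx : x ∈ J) (hy : y ∈ J) :
    x + y ∈ J :=
  hJ.2.1 x hx y hy

theorem neg_mem (hJ : IsBHIdeal J) {x : H →L[ℂ] H} (hx : x ∈ J) : -x ∈ J := hJ.2.2.1 x hx

theorem mul_mem_left (hJ : IsBHIdeal J) (A : H →L[ℂ] H) {x : H →L[ℂ] H} (hx : x ∈ J) :
    A * x ∈ J :=
  (hJ.2.2.2 A x hx).1

theorem mul_mem_right (hJ : IsBHIdeal J) (A : H →L[ℂ] H) {x : H →L[ℂ] H} (hx : x ∈ J) :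
    x * A ∈ J :=
  (hJ.2.2.2 A x hx).2

theorem isSubideal_self (hJ : IsBHIdeal J) : IsSubideal J J :=
  ⟨subset_rfl, hJ.zero_mem, fun _ hx _ hy => hJ.add_mem hx hy, fun _ hx => hJ.neg_mem hx,
    fun A _ _ hx => ⟨hJ.mul_mem_left A hx, hJ.mul_mem_right A hx⟩⟩

theorem inter_isLinearSubideal {I : Set (H →L[ℂ] H)} (hI : IsBHIdeal I) (hJ : IsBHIdeal J) :
    IsLinearSubideal J (I ∩ J) := by
  have mul_mem_left : ∀ A : H →L[ℂ] H, ∀ x ∈ I ∩ J, A * x ∈ I ∩ J :=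
    fun A _ hx => ⟨hI.mul_mem_left A hx.1, hJ.mul_mem_left A hx.2⟩
  refine ⟨⟨Set.inter_subset_right, ⟨hI.zero_mem, hJ.zero_mem⟩,
    fun _ hx _ hy => ⟨hI.add_mem hx.1 hy.1, hJ.add_mem hx.2 hy.2⟩,
    fun _ hx => ⟨hI.neg_mem hx.1, hJ.neg_mem hx.2⟩,
    fun A _ _ hx => ⟨mul_mem_left A _ hx, hI.mul_mem_right A hx.1, hJ.mul_mem_right A hx.2⟩⟩,
    fun c x hx => ?_⟩
  rw [← one_mul x, ← smul_mul_assoc]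
  exact mul_mem_left _ x hx

end IsBHIdeal

namespace IsSubideal

variable {J I : Set (H →L[ℂ] H)}

theorem zero_mem (hI : IsSubideal J I) : (0 : H →L[ℂ] H) ∈ I := hI.2.1

theorem add_mem (hI : IsSubideal J I) {x y : H →L[ℂ] H} (hx : x ∈ I) (hy : y ∈ I) :
    x + y ∈ I :=
  hI.2.2.1 x hx y hy

theorem neg_mem (hI : IsSubideal J I) {x : H →L[ℂ] H} (hx : x ∈ I) : -x ∈ I := hI.2.2.2.1 x hx

theorem mul_mem_left (hI : IsSubideal J I) {A x : H →L[ℂ] H} (hA : A ∈ J) (hx : x ∈ I) :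
    A * x ∈ I :=
  (hI.2.2.2.2 A hA x hx).1

theorem mul_mem_right (hI : IsSubideal J I) {A x : H →L[ℂ] H} (hA : A ∈ J) (hx : x ∈ I) :
    x * A ∈ I :=
  (hI.2.2.2.2 A hA x hx).2

theorem isBHIdeal_setOf_sandwich_mem (hJ : IsBHIdeal J) (hI : IsSubideal J I) :
    IsBHIdeal {X : H →L[ℂ] H | ∀ A ∈ J, ∀ B ∈ J, A * X * B ∈ I} := by
  refine ⟨fun A _ B _ => by simpa using hI.zero_mem, fun x hx y hy A hA B hB => ?_,
    fun x hx A hA B hB => ?_, fun C x hx => ⟨fun A hA B hB => ?_, fun A hA B hB => ?_⟩⟩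
  · simpa [mul_add, add_mul] using hI.add_mem (hx A hA B hB) (hy A hA B hB)
  · simpa using hI.neg_mem (hx A hA B hB)
  · simpa [mul_assoc] using hx (A * C) (hJ.mul_mem_right C hA) B hB
  · simpa [mul_assoc] using hx A hA (C * B) (hJ.mul_mem_left C hB)

theorem JGenJ_subset (hJ : IsBHIdeal J) (hI : IsSubideal J I) {𝒮 : Set (H →L[ℂ] H)}
    (h𝒮 : 𝒮 ⊆ I) : JGenJ J 𝒮 ⊆ I := by
  have genBH_subset : genBH 𝒮 ⊆ {X | ∀ A ∈ J, ∀ B ∈ J, A * X * B ∈ I} :=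
    Set.sInter_subset_of_mem ⟨hI.isBHIdeal_setOf_sandwich_mem hJ,
      fun s hs A hA B hB => hI.mul_mem_right hB (hI.mul_mem_left hA (h𝒮 hs))⟩
  rintro T ⟨n, A, X, B, hmem, rfl⟩
  refine Finset.sum_induction _ (· ∈ I) (fun _ _ => hI.add_mem) hI.zero_mem fun i _ => ?_
  obtain ⟨hA, hX, hB⟩ := hmem i
  exact genBH_subset hX (A i) hA (B i) hB

theorem JSplus_subset (hJ : IsBHIdeal J) (hI : IsSubideal J I) {S : H →L[ℂ] H} (hS : S ∈ I) :
    JSplus J S ⊆ I := by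
  rintro T ⟨A, hA, B, hB, Y, hY, rfl⟩
  exact hI.add_mem (hI.add_mem (hI.mul_mem_left hA hS) (hI.mul_mem_right hB hS))
    (hI.JGenJ_subset hJ (Set.singleton_subset_iff.mpr hS) hY)

end IsSubideal

theorem IsRealSubideal.isSubideal {J I : Set (H →L[ℂ] H)} (hI : IsRealSubideal J I) :
    IsSubideal J I :=
  hI.1

theorem IsLinearSubideal.isRealSubideal {J I : Set (H →L[ℂ] H)} (hI : IsLinearSubideal J I) :
    IsRealSubideal J I :=
  ⟨hI.1, fun r x hx => by simpa only [Complex.coe_smul] using hI.2 r x hx⟩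

section JGenJ

variable {J 𝒮 : Set (H →L[ℂ] H)}

theorem zero_mem_JGenJ : (0 : H →L[ℂ] H) ∈ JGenJ J 𝒮 :=
  ⟨0, ![], ![], ![], fun i => i.elim0, by simp⟩

theorem mul_mul_mem_JGenJ {A X B : H →L[ℂ] H} (hA : A ∈ J) (hX : X ∈ genBH 𝒮) (hB : B ∈ J) :
    A * X * B ∈ JGenJ J 𝒮 :=
  ⟨1, ![A], ![X], ![B], Fin.forall_fin_one.mpr ⟨hA, hX, hB⟩, by simp⟩

theorem add_mem_JGenJ {x y : H →L[ℂ] H} (hx : x ∈ JGenJ J 𝒮) (hy : y ∈ JGenJ J 𝒮) :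
    x + y ∈ JGenJ J 𝒮 := by
  obtain ⟨n, A, X, B, hmem, rfl⟩ := hx
  obtain ⟨m, A', X', B', hmem', rfl⟩ := hy
  refine ⟨n + m, Fin.append A A', Fin.append X X', Fin.append B B',
    Fin.addCases (fun i => by simpa using hmem i) (fun i => by simpa using hmem' i), ?_⟩
  simp [Fin.sum_univ_add]

theorem neg_mem_JGenJ (hJ : IsBHIdeal J) {x : H →L[ℂ] H} (hx : x ∈ JGenJ J 𝒮) :
    -x ∈ JGenJ J 𝒮 := by
  obtain ⟨n, A, X, B, hmem, rfl⟩ := hx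
  exact ⟨n, fun i => -A i, X, B, fun i => ⟨hJ.neg_mem (hmem i).1, (hmem i).2⟩, by simp⟩

theorem mul_mem_JGenJ_left (hJ : IsBHIdeal J) (C : H →L[ℂ] H) {x : H →L[ℂ] H}
    (hx : x ∈ JGenJ J 𝒮) : C * x ∈ JGenJ J 𝒮 := by
  obtain ⟨n, A, X, B, hmem, rfl⟩ := hx
  refine ⟨n, fun i => C * A i, X, B, fun i => ⟨hJ.mul_mem_left C (hmem i).1, (hmem i).2⟩, ?_⟩
  simp [Finset.mul_sum, mul_assoc]

theorem mul_mem_JGenJ_right (hJ : IsBHIdeal J) (C : H →L[ℂ] H) {x : H →L[ℂ] H}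
    (hx : x ∈ JGenJ J 𝒮) : x * C ∈ JGenJ J 𝒮 := by
  obtain ⟨n, A, X, B, hmem, rfl⟩ := hx
  refine ⟨n, A, X, fun i => B i * C,
    fun i => ⟨(hmem i).1, (hmem i).2.1, hJ.mul_mem_right C (hmem i).2.2⟩, ?_⟩
  simp [Finset.sum_mul, mul_assoc]

theorem isBHIdeal_JGenJ (hJ : IsBHIdeal J) : IsBHIdeal (JGenJ J 𝒮) :=
  ⟨zero_mem_JGenJ, fun _ hx _ hy => add_mem_JGenJ hx hy, fun _ => neg_mem_JGenJ hJ,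
    fun C _ hx => ⟨mul_mem_JGenJ_left hJ C hx, mul_mem_JGenJ_right hJ C hx⟩⟩

end JGenJ

section JSplus

variable {J : Set (H →L[ℂ] H)} {S : H →L[ℂ] H}

theorem JGenJ_subset_JSplus (hJ : IsBHIdeal J) : JGenJ J {S} ⊆ JSplus J S :=
  fun Y hY => ⟨0, hJ.zero_mem, 0, hJ.zero_mem, Y, hY, by simp⟩

theorem JSplus_subset_genSub (hJ : IsBHIdeal J) : JSplus J S ⊆ genSub J {S} :=
  Set.subset_sInter fun _ hI => hI.1.JSplus_subset hJ (hI.2 rfl)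

theorem mem_genBH_singleton_self : S ∈ genBH {S} :=
  Set.mem_sInter.mpr fun _ hI => hI.2 rfl

theorem isSubideal_JSplus (hJ : IsBHIdeal J) (hS : S ∈ J) : IsSubideal J (JSplus J S) := by
  refine ⟨hJ.isSubideal_self.JSplus_subset hJ hS, JGenJ_subset_JSplus hJ zero_mem_JGenJ,
    ?_, ?_, fun C hC x hx => ?_⟩
  · rintro _ ⟨A, hA, B, hB, Y, hY, rfl⟩ _ ⟨A', hA', B', hB', Y', hY', rfl⟩
    exact ⟨A + A', hJ.add_mem hA hA', B + B', hJ.add_mem hB hB', Y + Y', add_mem_JGenJ hY hY',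
      by noncomm_ring⟩
  · rintro _ ⟨A, hA, B, hB, Y, hY, rfl⟩
    exact ⟨-A, hJ.neg_mem hA, -B, hJ.neg_mem hB, -Y, neg_mem_JGenJ hJ hY, by noncomm_ring⟩
  obtain ⟨A, hA, B, hB, Y, hY, rfl⟩ := hx
  -- `C (A S + S B + Y) = (C A) S + (C S B + C Y)`, and the cross term `C S B` lies in `J(S)J`.
  constructor
  · exact ⟨C * A, hJ.mul_mem_left C hA, 0, hJ.zero_mem, C * S * B + C * Y,
      add_mem_JGenJ (mul_mul_mem_JGenJ hC mem_genBH_singleton_self hB)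
        (mul_mem_JGenJ_left hJ C hY), by noncomm_ring⟩
  · exact ⟨0, hJ.zero_mem, B * C, hJ.mul_mem_right C hB, A * S * C + Y * C,
      add_mem_JGenJ (mul_mul_mem_JGenJ hA mem_genBH_singleton_self hC)
        (mul_mem_JGenJ_right hJ C hY), by noncomm_ring⟩

end JSplus

section Generated

variable {J 𝒮 : Set (H →L[ℂ] H)}

theorem genSub_subset_genReal : genSub J 𝒮 ⊆ genReal J 𝒮 :=
  Set.sInter_subset_sInter fun _ hI => ⟨hI.1.isSubideal, hI.2⟩

theorem genReal_subset_genLin : genReal J 𝒮 ⊆ genLin J 𝒮 :=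
  Set.sInter_subset_sInter fun _ hI => ⟨hI.1.isRealSubideal, hI.2⟩

theorem genLin_subset_genBH (hJ : IsBHIdeal J) (h𝒮 : 𝒮 ⊆ J) : genLin J 𝒮 ⊆ genBH 𝒮 :=
  Set.subset_sInter fun I hI =>
    (Set.sInter_subset_of_mem (S := {I | IsLinearSubideal J I ∧ 𝒮 ⊆ I}) (t := I ∩ J)
      ⟨hI.1.inter_isLinearSubideal hJ, Set.subset_inter hI.2 h𝒮⟩).trans Set.inter_subset_left

end Generated

end

/-- the inclusion chain
`J(S)J ⊆ JS + SJ + J(S)J ⊆ ⟨S⟩_J ⊆ (S)_J^ℝ ⊆ (S)_J ⊆ (S)`, with `J(S)J` a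
`B(H)`-ideal and `JS + SJ + J(S)J` a `J`-ideal. -/
theorem stmt_4 (J : Set (H →L[ℂ] H)) (hJ : IsBHIdeal J)
    (S : H →L[ℂ] H) (hS : S ∈ J) :
    JGenJ J {S} ⊆ JSplus J S ∧
    JSplus J S ⊆ genSub J {S} ∧
    genSub J {S} ⊆ genReal J {S} ∧
    genReal J {S} ⊆ genLin J {S} ∧
    genLin J {S} ⊆ genBH {S} ∧
    IsBHIdeal (JGenJ J {S}) ∧
    IsSubideal J (JSplus J S) :=
  ⟨JGenJ_subset_JSplus hJ,
    JSplus_subset_genSub hJ,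
    genSub_subset_genReal,
    genReal_subset_genLin,
    genLin_subset_genBH hJ (Set.singleton_subset_iff.mpr hS),
    isBHIdeal_JGenJ hJ,
    isSubideal_JSplus hJ hS⟩
end

section
/- Let J be a B(H)-ideal and S ∈ J. Then JS + SJ + J(S)J is never a maximal J-ideal in ⟨S⟩_J: if JS + SJ + J(S)J ⊊ ⟨S⟩_J, then there exists a J-ideal I with JS + SJ + J(S)J ⊊ I ⊊ ⟨S⟩_J. -/
open scoped BigOperators
open TopologicalSpace

variable {H : Type*} [NormedAddCommGroup H] [InnerProductSpace ℂ H] [CompleteSpace H]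

/-! `JS + SJ + J(S)J` is a complex-linear `J`-ideal which contains `AS` and `SA` for every
`A ∈ J`, and it does not contain `S` since otherwise it would contain `⟨S⟩_J`. Adjoining the even
multiples `2ℤ·S` to it gives a `J`-ideal strictly in between: it contains `2S`, which the linear
ideal does not, and it misses `S`, since `S = 2nS + Y` would put `(1 - 2n)S`, hence `S`, into
`JS + SJ + J(S)J`. -/

set_option linter.unusedSectionVars false

section Subideals

variable {J I K L 𝒮 : Set (H →L[ℂ] H)}

theorem IsBHIdeal.smul_mem (hJ : IsBHIdeal J) (c : ℂ) {x : H →L[ℂ] H} (hx : x ∈ J) :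
    c • x ∈ J := by
  simpa only [smul_mul_assoc, one_mul] using (hJ.2.2.2 (c • 1) x hx).1

theorem IsBHIdeal.isSubideal_self_s15 (hJ : IsBHIdeal J) : IsSubideal J J :=
  ⟨subset_rfl, hJ.1, hJ.2.1, hJ.2.2.1, fun A _ x hx => hJ.2.2.2 A x hx⟩

def IsSubideal.toAddSubgroup (hI : IsSubideal J I) : AddSubgroup (H →L[ℂ] H) where
  carrier := I
  zero_mem' := hI.2.1
  add_mem' hx hy := hI.2.2.1 _ hx _ hy
  neg_mem' hx := hI.2.2.2.1 _ hx

theorem IsSubideal.sInter {F : Set (Set (H →L[ℂ] H))} (hF : ∀ I ∈ F, IsSubideal J I)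
    (hne : F.Nonempty) : IsSubideal J (⋂₀ F) := by
  obtain ⟨I₀, hI₀⟩ := hne
  refine ⟨(Set.sInter_subset_of_mem hI₀).trans (hF I₀ hI₀).1,
    fun I hI => (hF I hI).2.1, ?_, ?_, ?_⟩
  · exact fun x hx y hy I hI => (hF I hI).2.2.1 x (hx I hI) y (hy I hI)
  · exact fun x hx I hI => (hF I hI).2.2.2.1 x (hx I hI)
  · exact fun A hA x hx =>
      ⟨fun I hI => ((hF I hI).2.2.2.2 A hA x (hx I hI)).1,
        fun I hI => ((hF I hI).2.2.2.2 A hA x (hx I hI)).2⟩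

theorem subset_genBH : 𝒮 ⊆ genBH 𝒮 :=
  Set.subset_sInter fun _ hI => hI.2

theorem subset_genSub : 𝒮 ⊆ genSub J 𝒮 :=
  Set.subset_sInter fun _ hI => hI.2

theorem genSub_subset (hI : IsSubideal J I) (h𝒮 : 𝒮 ⊆ I) : genSub J 𝒮 ⊆ I :=
  Set.sInter_subset_of_mem ⟨hI, h𝒮⟩

theorem isSubideal_genSub (hJ : IsBHIdeal J) (h𝒮 : 𝒮 ⊆ J) : IsSubideal J (genSub J 𝒮) :=
  IsSubideal.sInter (fun _ hI => hI.1) ⟨J, hJ.isSubideal_self_s15, h𝒮⟩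

theorem IsLinearSubideal.mem_of_zsmul_mem (hK : IsLinearSubideal J K) {k : ℤ} (hk : k ≠ 0)
    {x : H →L[ℂ] H} (hx : k • x ∈ K) : x ∈ K := by
  have hk' : (k : ℂ) ≠ 0 := Int.cast_ne_zero.2 hk
  rw [← Int.cast_smul_eq_zsmul ℂ] at hx
  simpa only [smul_smul, inv_mul_cancel₀ hk', one_smul] using hK.2 (k : ℂ)⁻¹ _ hx

theorem IsLinearSubideal.exists_isSubideal_between {S : H →L[ℂ] H} (hK : IsLinearSubideal J K)
    (hL : IsSubideal J L) (hKL : K ⊆ L) (hSL : S ∈ L) (hSK : S ∉ K)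
    (hJS : ∀ A ∈ J, A * S ∈ K ∧ S * A ∈ K) :
    ∃ I, IsSubideal J I ∧ K ⊂ I ∧ I ⊂ L := by
  set I := hK.1.toAddSubgroup ⊔ AddSubgroup.zmultiples (2 • S)
  have mem_I {T : H →L[ℂ] H} : T ∈ I ↔ ∃ y ∈ K, ∃ n : ℤ, y + n • 2 • S = T := by
    simp only [I, AddSubgroup.mem_sup, AddSubgroup.mem_zmultiples_iff]
    exact ⟨fun ⟨y, hy, _, ⟨n, hn⟩, hT⟩ => ⟨y, hy, n, hn ▸ hT⟩,
      fun ⟨y, hy, n, hT⟩ => ⟨y, hy, _, ⟨n, rfl⟩, hT⟩⟩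
  have hIL : (I : Set (H →L[ℂ] H)) ⊆ L :=
    sup_le (show hK.1.toAddSubgroup ≤ hL.toAddSubgroup from hKL)
      (AddSubgroup.zmultiples_le_of_mem (hL.toAddSubgroup.nsmul_mem hSL 2))
  have hmul_I : ∀ A ∈ J, ∀ T ∈ I, A * T ∈ K ∧ T * A ∈ K := by
    intro A hA T hT
    obtain ⟨y, hy, n, rfl⟩ := mem_I.1 hT
    have hyA := hK.1.2.2.2.2 A hA y hy
    rw [mul_add, add_mul, mul_smul_comm, mul_smul_comm, smul_mul_assoc, smul_mul_assoc]
    exact ⟨hK.1.toAddSubgroup.add_mem hyA.1 (zsmul_mem (nsmul_mem (hJS A hA).1 2) n),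
      hK.1.toAddSubgroup.add_mem hyA.2 (zsmul_mem (nsmul_mem (hJS A hA).2 2) n)⟩
  have hKI : K ⊆ I := le_sup_left (a := hK.1.toAddSubgroup)
  have h2S_I : 2 • S ∈ I := AddSubgroup.mem_sup_right (AddSubgroup.mem_zmultiples _)
  have h2S_K : 2 • S ∉ K := fun h =>
    hSK (hK.mem_of_zsmul_mem (k := 2) two_ne_zero (by rwa [two_zsmul, ← two_nsmul]))
  have hS_I : S ∉ I := by
    intro h
    obtain ⟨y, hy, n, hyS⟩ := mem_I.1 h
    have hy' : (1 - 2 * n) • S = y := by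
      rw [eq_sub_of_add_eq hyS]
      module
    exact hSK (hK.mem_of_zsmul_mem (by omega) (hy' ▸ hy))
  exact ⟨I, ⟨hIL.trans hL.1, I.zero_mem, fun _ hx _ hy => I.add_mem hx hy,
      fun _ hx => I.neg_mem hx, fun A hA x hx => ⟨hKI (hmul_I A hA x hx).1, hKI (hmul_I A hA x hx).2⟩⟩,
    Set.ssubset_iff_of_subset hKI |>.2 ⟨_, h2S_I, h2S_K⟩,
    Set.ssubset_iff_of_subset hIL |>.2 ⟨S, hSL, hS_I⟩⟩

end Subideals

namespace JGenJ

variable {J 𝒮 : Set (H →L[ℂ] H)} {x y : H →L[ℂ] H}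

theorem zero_mem : (0 : H →L[ℂ] H) ∈ JGenJ J 𝒮 :=
  ⟨0, Fin.elim0, Fin.elim0, Fin.elim0, fun i => i.elim0, by simp⟩

theorem mul_mul_mem {A X B : H →L[ℂ] H} (hA : A ∈ J) (hX : X ∈ genBH 𝒮) (hB : B ∈ J) :
    A * X * B ∈ JGenJ J 𝒮 :=
  ⟨1, fun _ => A, fun _ => X, fun _ => B, fun _ => ⟨hA, hX, hB⟩, by simp⟩

theorem add_mem (hx : x ∈ JGenJ J 𝒮) (hy : y ∈ JGenJ J 𝒮) : x + y ∈ JGenJ J 𝒮 := by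
  obtain ⟨n, A, X, B, h, rfl⟩ := hx
  obtain ⟨m, A', X', B', h', rfl⟩ := hy
  refine ⟨n + m, Fin.append A A', Fin.append X X', Fin.append B B',
    Fin.addCases (by simpa using h) (by simpa using h'), ?_⟩
  simp [Fin.sum_univ_add]

theorem mul_left_mem (hJ : IsBHIdeal J) (C : H →L[ℂ] H) (hx : x ∈ JGenJ J 𝒮) :
    C * x ∈ JGenJ J 𝒮 := by
  obtain ⟨n, A, X, B, h, rfl⟩ := hx
  refine ⟨n, fun i => C * A i, X, B, fun i => ⟨(hJ.2.2.2 C _ (h i).1).1, (h i).2⟩, ?_⟩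
  simp only [Finset.mul_sum, mul_assoc]

theorem mul_right_mem (hJ : IsBHIdeal J) (C : H →L[ℂ] H) (hx : x ∈ JGenJ J 𝒮) :
    x * C ∈ JGenJ J 𝒮 := by
  obtain ⟨n, A, X, B, h, rfl⟩ := hx
  refine ⟨n, A, X, fun i => B i * C,
    fun i => ⟨(h i).1, (h i).2.1, (hJ.2.2.2 C _ (h i).2.2).2⟩, ?_⟩
  simp only [Finset.sum_mul, mul_assoc]

theorem subset (hJ : IsBHIdeal J) : JGenJ J 𝒮 ⊆ J := by
  rintro _ ⟨n, A, X, B, h, rfl⟩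
  exact Finset.sum_induction _ (· ∈ J) (fun _ _ hx hy => hJ.2.1 _ hx _ hy) hJ.1
    fun i _ => (hJ.2.2.2 (B i) _ (hJ.2.2.2 (X i) (A i) (h i).1).2).2

end JGenJ

namespace JSplus

variable {J : Set (H →L[ℂ] H)} {S x y : H →L[ℂ] H}

theorem mul_self_mem (hJ : IsBHIdeal J) {A : H →L[ℂ] H} (hA : A ∈ J) : A * S ∈ JSplus J S :=
  ⟨A, hA, 0, hJ.1, 0, JGenJ.zero_mem, by simp⟩

theorem self_mul_mem (hJ : IsBHIdeal J) {A : H →L[ℂ] H} (hA : A ∈ J) : S * A ∈ JSplus J S :=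
  ⟨0, hJ.1, A, hA, 0, JGenJ.zero_mem, by simp⟩

theorem add_mem (hJ : IsBHIdeal J) (hx : x ∈ JSplus J S) (hy : y ∈ JSplus J S) :
    x + y ∈ JSplus J S := by
  obtain ⟨A, hA, B, hB, Y, hY, rfl⟩ := hx
  obtain ⟨A', hA', B', hB', Y', hY', rfl⟩ := hy
  exact ⟨A + A', hJ.2.1 _ hA _ hA', B + B', hJ.2.1 _ hB _ hB', Y + Y', JGenJ.add_mem hY hY',
    by noncomm_ring⟩

theorem smul_mem (hJ : IsBHIdeal J) (c : ℂ) (hx : x ∈ JSplus J S) : c • x ∈ JSplus J S := by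
  obtain ⟨A, hA, B, hB, Y, hY, rfl⟩ := hx
  refine ⟨c • A, hJ.smul_mem c hA, c • B, hJ.smul_mem c hB, c • Y, ?_, ?_⟩
  · simpa only [smul_mul_assoc, one_mul] using JGenJ.mul_left_mem hJ (c • 1) hY
  · simp only [smul_add, smul_mul_assoc, mul_smul_comm]

theorem mul_left_mem (hJ : IsBHIdeal J) {C : H →L[ℂ] H} (hC : C ∈ J) (hx : x ∈ JSplus J S) :
    C * x ∈ JSplus J S := by
  obtain ⟨A, hA, B, hB, Y, hY, rfl⟩ := hx
  refine ⟨C * A, (hJ.2.2.2 A C hC).2, 0, hJ.1, C * S * B + C * Y, ?_, by noncomm_ring⟩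
  exact JGenJ.add_mem (JGenJ.mul_mul_mem hC (subset_genBH rfl) hB) (JGenJ.mul_left_mem hJ C hY)

theorem mul_right_mem (hJ : IsBHIdeal J) {C : H →L[ℂ] H} (hC : C ∈ J) (hx : x ∈ JSplus J S) :
    x * C ∈ JSplus J S := by
  obtain ⟨A, hA, B, hB, Y, hY, rfl⟩ := hx
  refine ⟨0, hJ.1, B * C, (hJ.2.2.2 C B hB).2, A * S * C + Y * C, ?_, by noncomm_ring⟩
  exact JGenJ.add_mem (JGenJ.mul_mul_mem hA (subset_genBH rfl) hC) (JGenJ.mul_right_mem hJ C hY)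

theorem subset (hJ : IsBHIdeal J) (hS : S ∈ J) : JSplus J S ⊆ J := by
  rintro _ ⟨A, hA, B, hB, Y, hY, rfl⟩
  exact hJ.2.1 _ (hJ.2.1 _ (hJ.2.2.2 A S hS).1 _ (hJ.2.2.2 B S hS).2) _ (JGenJ.subset hJ hY)

theorem isLinearSubideal (hJ : IsBHIdeal J) (hS : S ∈ J) : IsLinearSubideal J (JSplus J S) := by
  refine ⟨⟨subset hJ hS, ?_, fun _ hx _ hy => add_mem hJ hx hy, fun x hx => ?_,
    fun _ hA _ hx => ⟨mul_left_mem hJ hA hx, mul_right_mem hJ hA hx⟩⟩,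
    fun c _ hx => smul_mem hJ c hx⟩
  · simpa using mul_self_mem (S := S) hJ hJ.1
  · simpa using smul_mem hJ (-1) hx

end JSplus

/-- `JS + SJ + J(S)J` is never a maximal `J`-ideal in `⟨S⟩_J`. -/
theorem stmt_15 (J : Set (H →L[ℂ] H)) (hJ : IsBHIdeal J)
    (S : H →L[ℂ] H) (hS : S ∈ J)
    (h : JSplus J S ⊂ genSub J {S}) :
    ∃ I, IsSubideal J I ∧ JSplus J S ⊂ I ∧ I ⊂ genSub J {S} := by
  have hK := JSplus.isLinearSubideal hJ hS
  have hSK : S ∉ JSplus J S := fun hSK =>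
    h.2 (genSub_subset hK.1 (Set.singleton_subset_iff.2 hSK))
  exact hK.exists_isSubideal_between (isSubideal_genSub hJ (Set.singleton_subset_iff.2 hS))
    h.1 (subset_genSub rfl) hSK fun A hA => ⟨JSplus.mul_self_mem hJ hA, JSplus.self_mul_mem hJ hA⟩
end
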